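/- arXiv:2307.03540 — 2 statements merged into one kernel-verified Lean document; each statement's English description precedes it below -/
import Mathlib

section
/- In a dual weak brace S, for all a, b ∈ S the following are equivalent: (i) a · b is an idempotent; (ii) a · b = a⁰ + b⁰; (iii) a + b = a ∘ b. Here a · b := -a + a ∘ b - b and a⁰ := a - a. -/
/-- A weak brace: `(S,+)` and `(S,∘)` are inverse semigroups satisfying
`a ∘ (b + c) = a ∘ b - a + a ∘ c` and `a ∘ a⁻ = -a + a`. -/
class WeakBrace (S : Type*) where
  add : S → S → S
  mul : S → S → S
  neg : S → S
  inv : S → S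
  add_assoc : ∀ a b c : S, add (add a b) c = add a (add b c)
  mul_assoc : ∀ a b c : S, mul (mul a b) c = mul a (mul b c)
  add_reg : ∀ a : S, add (add a (neg a)) a = a
  neg_reg : ∀ a : S, add (add (neg a) a) (neg a) = neg a
  neg_unique : ∀ a x : S, add (add a x) a = a → add (add x a) x = x → x = neg a
  mul_reg : ∀ a : S, mul (mul a (inv a)) a = a
  inv_reg : ∀ a : S, mul (mul (inv a) a) (inv a) = inv a
  inv_unique : ∀ a x : S, mul (mul a x) a = a → mul (mul x a) x = x → x = inv a
  distrib : ∀ a b c : S, mul a (add b c) = add (add (mul a b) (neg a)) (mul a c)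
  link : ∀ a : S, mul a (inv a) = add (neg a) a

/-- A dual weak brace: a weak brace whose multiplicative semigroup is Clifford. -/
class DualWeakBrace (S : Type*) extends WeakBrace S where
  clifford : ∀ a : S, WeakBrace.mul a (WeakBrace.inv a) = WeakBrace.mul (WeakBrace.inv a) a

namespace WeakBrace

variable {S : Type*} [WeakBrace S]

/-- `λ_a(b) = -a + a ∘ b`. -/
def lam (a b : S) : S := add (neg a) (mul a b)

/-- `ρ_b(a) = (-a + a ∘ b)⁻ ∘ a ∘ b`. -/
def rho (b a : S) : S := mul (mul (inv (lam a b)) a) b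

/-- `a · b = -a + a ∘ b - b`. -/
def cdot (a b : S) : S := add (add (neg a) (mul a b)) (neg b)

/-- `a⁰ = a - a`. -/
def sq (a : S) : S := add a (neg a)

/-- Additive idempotent (the sets of idempotents of `+` and `∘` coincide). -/
def IsIdem (e : S) : Prop := add e e = e

/-- `[a,b]₊ = -a - b + a + b`. -/
def brkt (a b : S) : S := add (add (add (neg a) (neg b)) a) b

/-- `I` is a full inverse subsemigroup of `(S,+)`. -/
def IsFullAddSub (I : Set S) : Prop :=
  (∀ e : S, IsIdem e → e ∈ I) ∧ (∀ x ∈ I, ∀ y ∈ I, add x y ∈ I) ∧ (∀ x ∈ I, neg x ∈ I)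

/-- `I` is a normal subsemigroup of `(S,+)`. -/
def IsNormalAdd (I : Set S) : Prop :=
  IsFullAddSub I ∧ ∀ a : S, ∀ x ∈ I, add (add (neg a) x) a ∈ I

/-- `I` is a normal subsemigroup of `(S,∘)`. -/
def IsNormalMul (I : Set S) : Prop :=
  (∀ e : S, IsIdem e → e ∈ I) ∧ (∀ x ∈ I, ∀ y ∈ I, mul x y ∈ I) ∧ (∀ x ∈ I, inv x ∈ I) ∧
    ∀ a : S, ∀ x ∈ I, mul (mul (inv a) x) a ∈ I

/-- `I` is a left ideal of the weak brace `S`. -/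
def IsLeftIdeal (I : Set S) : Prop :=
  IsFullAddSub I ∧ ∀ a : S, ∀ x ∈ I, lam a x ∈ I

/-- `I` is an ideal of the weak brace `S`. -/
def IsIdeal (I : Set S) : Prop :=
  IsNormalAdd I ∧ (∀ a : S, ∀ x ∈ I, lam a x ∈ I) ∧ IsNormalMul I

/-- The socle `Soc(S)`. -/
def Soc (S : Type*) [WeakBrace S] : Set S :=
  {a | ∀ b : S, add a b = mul a b ∧ add a b = add b a}

/-- The annihilator `Ann(S)`. -/
def Ann (S : Type*) [WeakBrace S] : Set S :=
  {a | ∀ b : S, add a b = add b a ∧ add a b = mul a b ∧ mul a b = mul b a}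

/-- The congruence `a ∼_I b ⟺ a⁰ = b⁰ and -a + b ∈ I` associated to an ideal `I`. -/
def simI (I : Set S) (a b : S) : Prop := sq a = sq b ∧ add (neg a) b ∈ I

/-- Membership in the inverse subsemigroup of `(S,+)` generated by a set `X`. -/
inductive genAdd (X : Set S) : S → Prop
  | base : ∀ x ∈ X, genAdd X x
  | add : ∀ a b : S, genAdd X a → genAdd X b → genAdd X (add a b)
  | neg : ∀ a : S, genAdd X a → genAdd X (neg a)

/-- `X · Y`: the additive inverse subsemigroup generated by the elements `x · y`. -/
def cdotSet (X Y : Set S) : Set S :=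
  {s | genAdd {z | ∃ x ∈ X, ∃ y ∈ Y, z = cdot x y} s}

/-- `S^(n)` for `n ≥ 1`: `S^(1) = S`, `S^(n+1) = S^(n) · S`. -/
def Spow (S : Type*) [WeakBrace S] : ℕ → Set S
  | 0 => Set.univ
  | 1 => Set.univ
  | (n+2) => cdotSet (Spow S (n+1)) Set.univ

end WeakBrace

/-!
Both `(S,+)` and `(S,∘)` are Clifford semigroups: for `∘` this is the hypothesis, for `+` it follows
by expanding `a ∘ (a⁻ + (-a + a))` in two ways. In a Clifford semigroup `x ↦ x⁰` is a homomorphism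
onto the central idempotents, and on idempotents `∘` and `+` agree. Hence `(a · b)⁰ = a⁰ + b⁰` and
`a + a · b + b = a ∘ b`, and the three conditions are related by inserting or cancelling the central
idempotents `a⁰` and `b⁰`.
-/

structure IsInverseSemigroup {T : Type*} (op : T → T → T) (iv : T → T) : Prop where
  assoc : ∀ a b c, op (op a b) c = op a (op b c)
  op_iv_op : ∀ a, op (op a (iv a)) a = a
  iv_op_iv : ∀ a, op (op (iv a) a) (iv a) = iv a
  eq_iv_of_op : ∀ a x, op (op a x) a = a → op (op x a) x = x → x = iv a

namespace IsInverseSemigroup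

variable {T : Type*} {op : T → T → T} {iv : T → T} (h : IsInverseSemigroup op iv)
  {e f : T}

local infixl:70 " ⋆ " => op

include h

theorem iv_iv (a : T) : iv (iv a) = a :=
  (h.eq_iv_of_op (iv a) a (h.iv_op_iv a) (h.op_iv_op a)).symm

theorem iv_eq_self (he : e ⋆ e = e) : iv e = e :=
  (h.eq_iv_of_op e e (by rw [he, he]) (by rw [he, he])).symm

theorem op_iv_idem (a : T) : a ⋆ iv a ⋆ (a ⋆ iv a) = a ⋆ iv a := by
  rw [← h.assoc, h.op_iv_op]

theorem iv_op_idem (a : T) : iv a ⋆ a ⋆ (iv a ⋆ a) = iv a ⋆ a := by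
  rw [← h.assoc, h.iv_op_iv]

theorem op_iv_op_assoc (a : T) : a ⋆ (iv a ⋆ a) = a := by
  rw [← h.assoc, h.op_iv_op]

theorem iv_op_iv_assoc (a : T) : iv a ⋆ (a ⋆ iv a) = iv a := by
  rw [← h.assoc, h.iv_op_iv]

theorem op_iv_op_op (a x : T) : a ⋆ (iv a ⋆ (a ⋆ x)) = a ⋆ x := by
  rw [← h.assoc, ← h.assoc, h.op_iv_op]

theorem iv_op_iv_op (a x : T) : iv a ⋆ (a ⋆ (iv a ⋆ x)) = iv a ⋆ x := by
  rw [← h.assoc, ← h.assoc, h.iv_op_iv]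

theorem idem_op_left (he : e ⋆ e = e) (x : T) : e ⋆ (e ⋆ x) = e ⋆ x := by
  rw [← h.assoc, he]

theorem iv_op_of_idem (he : e ⋆ e = e) (hf : f ⋆ f = f) :
    iv (e ⋆ f) = f ⋆ iv (e ⋆ f) ⋆ e := by
  symm
  apply h.eq_iv_of_op
  · simpa only [h.assoc, h.idem_op_left he, h.idem_op_left hf] using h.op_iv_op (e ⋆ f)
  · simpa only [h.assoc, h.idem_op_left he, h.idem_op_left hf] using
      congrArg (fun y => f ⋆ (y ⋆ e)) (h.iv_op_iv (e ⋆ f))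

theorem op_idem (he : e ⋆ e = e) (hf : f ⋆ f = f) : e ⋆ f ⋆ (e ⋆ f) = e ⋆ f := by
  have hx : iv (e ⋆ f) ⋆ iv (e ⋆ f) = iv (e ⋆ f) := by
    rw [h.iv_op_of_idem he hf]
    simpa only [h.assoc] using congrArg (fun y => f ⋆ (y ⋆ e)) (h.iv_op_iv (e ⋆ f))
  have hef : e ⋆ f = iv (e ⋆ f) := by rw [← h.iv_eq_self hx, h.iv_iv]
  rw [hef, hx]

theorem idem_comm (he : e ⋆ e = e) (hf : f ⋆ f = f) : e ⋆ f = f ⋆ e := by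
  have hef := h.op_idem he hf
  have hfe := h.op_idem hf he
  rw [h.eq_iv_of_op (e ⋆ f) (f ⋆ e) ?_ ?_, h.iv_eq_self hef]
  · simpa only [h.assoc, h.idem_op_left he, h.idem_op_left hf] using hef
  · simpa only [h.assoc, h.idem_op_left he, h.idem_op_left hf] using hfe

theorem iv_op (a b : T) : iv (a ⋆ b) = iv b ⋆ iv a := by
  have hc := h.idem_comm (h.op_iv_idem b) (h.iv_op_idem a)
  symm
  apply h.eq_iv_of_op
  · simpa only [h.assoc, h.op_iv_op_assoc, h.op_iv_op_op] using
      congrArg (fun y => a ⋆ (y ⋆ b)) hc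
  · simpa only [h.assoc, h.iv_op_iv_assoc, h.iv_op_iv_op] using
      congrArg (fun y => iv b ⋆ (y ⋆ iv a)) hc.symm

theorem comm_of_idem_of_clifford (hc : ∀ a, a ⋆ iv a = iv a ⋆ a) (he : e ⋆ e = e) (x : T) :
    e ⋆ x = x ⋆ e := by
  have hu := h.op_iv_idem x
  have key : x ⋆ iv x ⋆ e = iv x ⋆ e ⋆ x := by
    have := hc (e ⋆ x)
    rw [h.iv_op, h.iv_eq_self he] at this
    calc x ⋆ iv x ⋆ e = e ⋆ (x ⋆ iv x) ⋆ e := by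
          rw [h.idem_comm he hu, h.assoc (x ⋆ iv x) e e, he]
      _ = iv x ⋆ e ⋆ x := by simpa only [h.assoc, h.idem_op_left he] using this
  calc e ⋆ x = e ⋆ (x ⋆ iv x) ⋆ x := by rw [h.assoc, h.op_iv_op]
    _ = x ⋆ iv x ⋆ e ⋆ x := by rw [h.idem_comm he hu]
    _ = x ⋆ (iv x ⋆ e ⋆ x) := by simp only [h.assoc]
    _ = x ⋆ (x ⋆ iv x ⋆ e) := by rw [key]
    _ = x ⋆ e := by rw [hc, ← h.assoc, ← h.assoc, h.op_iv_op]

theorem op_iv_distrib_of_clifford (hc : ∀ a, a ⋆ iv a = iv a ⋆ a) (a b : T) :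
    a ⋆ b ⋆ iv (a ⋆ b) = a ⋆ iv a ⋆ (b ⋆ iv b) := by
  rw [h.iv_op, h.assoc, ← h.assoc b, h.comm_of_idem_of_clifford hc (h.op_iv_idem b), h.assoc]

end IsInverseSemigroup

namespace WeakBrace

section

variable {S : Type*} [WeakBrace S] {e f : S}

theorem isInverseSemigroup_add : IsInverseSemigroup (add : S → S → S) neg :=
  ⟨add_assoc, add_reg, neg_reg, neg_unique⟩

theorem isInverseSemigroup_mul : IsInverseSemigroup (mul : S → S → S) inv :=
  ⟨mul_assoc, mul_reg, inv_reg, inv_unique⟩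

theorem sq_eq_self (he : IsIdem e) : sq e = e := by
  rw [sq, isInverseSemigroup_add.iv_eq_self he, he]

theorem isIdem_iff_mul_self : IsIdem e ↔ mul e e = e := by
  constructor
  · intro he
    have h := mul_reg e
    rwa [link, isInverseSemigroup_add.iv_eq_self he, he] at h
  · intro he
    have h := link e
    rw [isInverseSemigroup_mul.iv_eq_self he, he] at h
    calc add e e = add e (add (neg e) e) := by rw [← h]
      _ = e := isInverseSemigroup_add.op_iv_op_assoc e

theorem neg_mul_eq (a b : S) : neg (mul a b) = add (add (neg a) (mul a (neg b))) (neg a) := by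
  symm
  apply isInverseSemigroup_add.eq_iv_of_op
  · have h := distrib a (add b (neg b)) b
    rw [add_reg, distrib a b (neg b)] at h
    simpa only [add_assoc] using h.symm
  · have h := distrib a (add (neg b) b) (neg b)
    rw [neg_reg, distrib a (neg b) b] at h
    simpa only [add_assoc] using (congrArg (fun w => add (add (neg a) w) (neg a)) h).symm

theorem mul_neg_inv_self (a : S) : mul a (neg (inv a)) = add a a := by
  have h := congrArg neg (neg_mul_eq a (neg (inv a)))
  rwa [isInverseSemigroup_add.iv_iv, isInverseSemigroup_add.iv_iv, link, add_assoc, neg_reg,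
    isInverseSemigroup_add.iv_op, isInverseSemigroup_add.iv_iv] at h

theorem mul_eq_add_of_isIdem (he : IsIdem e) (hf : IsIdem f) : mul e f = add e f := by
  have hem := isIdem_iff_mul_self.1 he
  have hfm := isIdem_iff_mul_self.1 hf
  have hg : IsIdem (mul e f) := isIdem_iff_mul_self.2 (isInverseSemigroup_mul.op_idem hem hfm)
  have hef : IsIdem (add e f) := isInverseSemigroup_add.op_idem he hf
  have hefm := isIdem_iff_mul_self.1 hef
  have hfe : mul f e = mul e f := isInverseSemigroup_mul.idem_comm hfm hem
  -- `e ∘ f` is absorbed by `e` and `f`, and `e + f = (e + f) ∘ (e + f)` expands to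
  -- `e ∘ f + (e + f) + e ∘ f`
  have hge : add (mul e f) e = mul e f := by
    have h := distrib e f f
    rwa [hf, isInverseSemigroup_add.iv_eq_self he, add_assoc,
      isInverseSemigroup_add.idem_comm he hg, ← add_assoc, hg, eq_comm] at h
  have hgf : add (mul e f) f = mul e f := by
    have h := distrib f e e
    rwa [he, isInverseSemigroup_add.iv_eq_self hf, hfe, add_assoc,
      isInverseSemigroup_add.idem_comm hf hg, ← add_assoc, hg, eq_comm] at h
  have hefe : mul (add e f) e = mul e f := by
    rw [isInverseSemigroup_mul.idem_comm hefm hem, distrib, hem,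
      isInverseSemigroup_add.iv_eq_self he, he, isInverseSemigroup_add.idem_comm he hg, hge]
  have heff : mul (add e f) f = mul e f := by
    rw [isInverseSemigroup_mul.idem_comm hefm hfm, distrib, hfe, hfm,
      isInverseSemigroup_add.iv_eq_self hf, add_assoc, hf, hgf]
  calc mul e f = add (add (mul e f) (add e f)) (mul e f) := by rw [← add_assoc, hge, hgf, hg]
    _ = mul (add e f) (add e f) := by
        rw [distrib, hefe, heff, isInverseSemigroup_add.iv_eq_self hef]
    _ = add e f := hefm

end

section

variable {S : Type*} [DualWeakBrace S]

theorem neg_add_self_eq_neg_inv_add_inv (a : S) : add (neg a) a = add (neg (inv a)) (inv a) := by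
  calc add (neg a) a = mul (inv a) a := by rw [← link, DualWeakBrace.clifford]
    _ = mul (inv a) (inv (inv a)) := by rw [isInverseSemigroup_mul.iv_iv]
    _ = add (neg (inv a)) (inv a) := link (inv a)

theorem neg_add_self_eq_add_sq (a : S) : add (neg a) a = add (add (neg a) a) (sq a) := by
  have hu : IsIdem (add (neg a) a) := isInverseSemigroup_add.iv_op_idem a
  have hv : IsIdem (sq a) := isInverseSemigroup_add.op_iv_idem a
  have hinv : add (inv a) (add (neg a) a) = inv a := by
    rw [neg_add_self_eq_neg_inv_add_inv]; exact isInverseSemigroup_add.op_iv_op_assoc (inv a)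
  have hmul : mul a (add (neg a) a) = add (add (add a a) (neg a)) (add (neg a) a) := by
    rw [neg_add_self_eq_neg_inv_add_inv, distrib, mul_neg_inv_self, link,
      ← neg_add_self_eq_neg_inv_add_inv]
  -- expand `a ∘ (a⁻ + (-a + a)) = a ∘ a⁻` by left distributivity
  have h := distrib a (inv a) (add (neg a) a)
  rw [hinv, link, hmul] at h
  calc add (neg a) a = add (add (add (add (neg a) a) (add (neg a) a)) (sq a)) (add (neg a) a) := by
        conv_lhs => rw [h]
        simp only [sq, add_assoc]
    _ = add (add (neg a) a) (sq a) := by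
        rw [hu, add_assoc (add (neg a) a) (sq a), isInverseSemigroup_add.idem_comm hv hu,
          ← add_assoc, hu]

theorem sq_eq_neg_add_self (a : S) : sq a = add (neg a) a := by
  have h := neg_add_self_eq_add_sq (neg a)
  rw [sq, isInverseSemigroup_add.iv_iv] at h
  calc sq a = add (sq a) (add (neg a) a) := h
    _ = add (add (neg a) a) (sq a) :=
        isInverseSemigroup_add.idem_comm (isInverseSemigroup_add.op_iv_idem a)
          (isInverseSemigroup_add.iv_op_idem a)
    _ = add (neg a) a := (neg_add_self_eq_add_sq a).symm

theorem sq_eq_mul_inv (a : S) : sq a = mul a (inv a) :=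
  (sq_eq_neg_add_self a).trans (link a).symm

theorem isIdem_sq (a : S) : IsIdem (sq a) := isInverseSemigroup_add.op_iv_idem a

theorem sq_add_self (a : S) : add (sq a) a = a := add_reg a

theorem add_sq_self (a : S) : add a (sq a) = a := by
  rw [sq_eq_neg_add_self]; exact isInverseSemigroup_add.op_iv_op_assoc a

theorem add_comm_of_isIdem {e : S} (he : IsIdem e) (x : S) : add e x = add x e :=
  isInverseSemigroup_add.comm_of_idem_of_clifford sq_eq_neg_add_self he x

theorem sq_add (a b : S) : sq (add a b) = add (sq a) (sq b) :=
  isInverseSemigroup_add.op_iv_distrib_of_clifford sq_eq_neg_add_self a b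

theorem sq_neg (a : S) : sq (neg a) = sq a := by
  rw [sq, isInverseSemigroup_add.iv_iv, sq_eq_neg_add_self]

theorem sq_mul (a b : S) : sq (mul a b) = add (sq a) (sq b) := by
  rw [sq_eq_mul_inv, isInverseSemigroup_mul.op_iv_distrib_of_clifford DualWeakBrace.clifford,
    ← sq_eq_mul_inv, ← sq_eq_mul_inv, mul_eq_add_of_isIdem (isIdem_sq a) (isIdem_sq b)]

theorem sq_cdot (a b : S) : sq (cdot a b) = add (sq a) (sq b) := by
  rw [cdot, sq_add, sq_add, sq_neg, sq_neg, sq_mul, ← add_assoc, isIdem_sq, add_assoc, isIdem_sq]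

theorem add_cdot_add (a b : S) : add a (add (cdot a b) b) = mul a b := by
  rw [cdot, add_assoc, add_assoc, ← sq_eq_neg_add_self, ← add_comm_of_isIdem (isIdem_sq b),
    ← add_assoc, ← add_assoc, ← sq, ← sq_mul, sq_add_self]

end

end WeakBrace

open WeakBrace
theorem stmt2 {S : Type*} [DualWeakBrace S] (a b : S) :
    (IsIdem (cdot a b) ↔ cdot a b = add (sq a) (sq b)) ∧
    (cdot a b = add (sq a) (sq b) ↔ add a b = mul a b) := by
  refine ⟨⟨fun h => ?_, fun h => ?_⟩, ⟨fun h => ?_, fun h => ?_⟩⟩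
  · rw [← sq_cdot, sq_eq_self h]
  · rw [h]
    exact isInverseSemigroup_add.op_idem (isIdem_sq a) (isIdem_sq b)
  · calc add a b = add a (add (add (sq a) (sq b)) b) := by
          rw [WeakBrace.add_assoc (sq a), sq_add_self, ← WeakBrace.add_assoc, add_sq_self]
      _ = mul a b := by rw [← h, add_cdot_add]
  · rw [cdot, ← h, ← WeakBrace.add_assoc (neg a), ← sq_eq_neg_add_self,
      WeakBrace.add_assoc (sq a), ← WeakBrace.sq]
end

section
/- In a dual weak brace S, for all a, b ∈ S and every idempotent e, a · (b + e) = a · b + a · e, where a · b := -a + a ∘ b - b. -/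
/-!
The additive semigroup of a weak brace is an inverse semigroup on which every
`λ_a(b) = -a + a ∘ b` acts as an endomorphism. Feeding `a ∘ a⁻ = -a + a` into the identity
`a ∘ c - a ∘ c = a ∘ (c - c) - a` shows `-a + a ≤ a - a` in the natural order on idempotents,
so `(S,+)` is Clifford and its idempotents are central. Now `a · x = λ_a(x) - x`, and for an
idempotent `e` the element `λ_a(e) - e = λ_a(e) + e` is idempotent, hence can be moved past `-b`
in `a · (b + e) = λ_a(b) + λ_a(e) + e - b`.
-/

class InverseAddSemigroup (M : Type*) extends AddSemigroup M, Neg M where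
  add_neg_add_cancel (a : M) : a + -a + a = a
  neg_add_neg_cancel (a : M) : -a + a + -a = -a
  eq_neg_of_inverse (a x : M) : a + x + a = a → x + a + x = x → x = -a

namespace InverseAddSemigroup

variable {M : Type*} [InverseAddSemigroup M]

protected theorem neg_neg (a : M) : - -a = a :=
  (eq_neg_of_inverse (-a) a (neg_add_neg_cancel a) (add_neg_add_cancel a)).symm

theorem neg_eq_self_of_idem {e : M} (he : e + e = e) : -e = e :=
  (eq_neg_of_inverse e e (by rw [he, he]) (by rw [he, he])).symm

theorem add_neg_idem (a : M) : a + -a + (a + -a) = a + -a := by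
  rw [← add_assoc, add_neg_add_cancel]

theorem neg_add_idem (a : M) : -a + a + (-a + a) = -a + a := by
  rw [← add_assoc, neg_add_neg_cancel]

theorem add_idem_of_idem {e f : M} (he : e + e = e) (hf : f + f = f) :
    e + f + (e + f) = e + f := by
  set x := -(e + f)
  have hx : x + (e + f) + x = x := neg_add_neg_cancel (e + f)
  have hfxe_idem : f + x + e + (f + x + e) = f + x + e := by
    calc f + x + e + (f + x + e) = f + (x + (e + f) + x) + e := by simp only [add_assoc]
      _ = f + x + e := by rw [hx]
  -- `f + x + e` is a second inverse of `e + f`, so it is `x`.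
  have hy : f + x + e = x := by
    refine eq_neg_of_inverse (e + f) (f + x + e) ?_ ?_
    · calc e + f + (f + x + e) + (e + f) = e + (f + f) + x + (e + e) + f := by
            simp only [add_assoc]
        _ = e + f := by rw [he, hf, add_assoc (e + f + x) e f]; exact add_neg_add_cancel (e + f)
    · calc f + x + e + (e + f) + (f + x + e) = f + (x + (e + e + (f + f)) + x) + e := by
            simp only [add_assoc]
        _ = f + x + e := by rw [he, hf, hx]
  rw [hy] at hfxe_idem
  have hxe : e + f = x := by
    rw [← InverseAddSemigroup.neg_neg (e + f), neg_eq_self_of_idem hfxe_idem]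
  rw [hxe, hfxe_idem]

theorem add_comm_of_idem {e f : M} (he : e + e = e) (hf : f + f = f) : e + f = f + e := by
  have hef := add_idem_of_idem he hf
  have hfe := add_idem_of_idem hf he
  have h : f + e = -(e + f) := by
    refine eq_neg_of_inverse (e + f) (f + e) ?_ ?_
    · calc e + f + (f + e) + (e + f) = e + (f + f) + (e + e) + f := by
            simp only [add_assoc]
        _ = e + f := by rw [he, hf, add_assoc, hef]
    · calc f + e + (e + f) + (f + e) = f + (e + e) + (f + f) + e := by
            simp only [add_assoc]
        _ = f + e := by rw [he, hf, add_assoc, hfe]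
  rw [h, neg_eq_self_of_idem hef]

protected theorem neg_add_rev (a b : M) : -(a + b) = -b + -a := by
  have hcomm : b + -b + (-a + a) = -a + a + (b + -b) :=
    add_comm_of_idem (add_neg_idem b) (neg_add_idem a)
  refine (eq_neg_of_inverse (a + b) (-b + -a) ?_ ?_).symm
  · calc a + b + (-b + -a) + (a + b) = a + (b + -b + (-a + a)) + b := by
          simp only [add_assoc]
      _ = a + -a + a + (b + -b + b) := by rw [hcomm]; simp only [add_assoc]
      _ = a + b := by rw [add_neg_add_cancel, add_neg_add_cancel]
  · calc -b + -a + (a + b) + (-b + -a) = -b + (-a + a + (b + -b)) + -a := by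
          simp only [add_assoc]
      _ = -b + b + -b + (-a + a + -a) := by rw [← hcomm]; simp only [add_assoc]
      _ = -b + -a := by rw [neg_add_neg_cancel, neg_add_neg_cancel]

protected theorem map_neg {N : Type*} [InverseAddSemigroup N] (f : M →ₙ+ N) (a : M) :
    f (-a) = -f a :=
  eq_neg_of_inverse (f a) (f (-a)) (by simp only [← map_add, add_neg_add_cancel])
    (by simp only [← map_add, neg_add_neg_cancel])

theorem add_comm_of_idem_of_clifford (hM : ∀ a : M, a + -a = -a + a) {e : M} (he : e + e = e)
    (a : M) : a + e = e + a := by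
  have hε : -a + a + e = e + (-a + a) := add_comm_of_idem (neg_add_idem a) he
  have hconj : a + e + -a = -a + a + e := by
    have h := hM (a + e)
    rw [InverseAddSemigroup.neg_add_rev, neg_eq_self_of_idem he] at h
    calc a + e + -a = a + e + (e + -a) := by rw [← add_assoc (a + e), add_assoc a e e, he]
      _ = e + -a + (a + e) := h
      _ = e + (-a + a) + e := by simp only [add_assoc]
      _ = -a + a + e := by rw [← hε, add_assoc, he]
  calc a + e = a + (-a + a + e) := by rw [← add_assoc a, ← add_assoc a, add_neg_add_cancel]
    _ = a + (e + (-a + a)) := by rw [hε]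
    _ = a + e + -a + a := by simp only [add_assoc]
    _ = e + (-a + a) + a := by rw [hconj, hε]
    _ = e + a := by rw [← hM a, add_assoc e, add_neg_add_cancel]

end InverseAddSemigroup

namespace WeakBrace

variable {S : Type*} [WeakBrace S]

instance toInverseAddSemigroup : InverseAddSemigroup S where
  add := add
  add_assoc := add_assoc
  neg := neg
  add_neg_add_cancel := add_reg
  neg_add_neg_cancel := neg_reg
  eq_neg_of_inverse := neg_unique

open InverseAddSemigroup

theorem lam_def (a b : S) : lam a b = -a + mul a b := rfl

theorem mul_add_distrib (a b c : S) : mul a (b + c) = mul a b + -a + mul a c := distrib a b c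

theorem lam_add (a b c : S) : lam a (b + c) = lam a b + lam a c := by
  simp only [lam_def, mul_add_distrib, _root_.add_assoc]

theorem mul_add_lam (a b c : S) : mul a b + lam a c = mul a (b + c) := by
  rw [lam_def, mul_add_distrib, _root_.add_assoc]

theorem lam_neg (a b : S) : lam a (-b) = -lam a b :=
  InverseAddSemigroup.map_neg ⟨lam a, lam_add a⟩ b

theorem neg_mul_eq_lam_neg_add (a c : S) : -mul a c = lam a (-c) + -a := by
  refine (eq_neg_of_inverse (mul a c) (lam a (-c) + -a) ?_ ?_).symm
  · rw [← _root_.add_assoc, mul_add_lam, _root_.add_assoc, ← lam_def, mul_add_lam,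
      add_neg_add_cancel]
  · rw [_root_.add_assoc _ (-a), ← lam_def, ← lam_add, ← _root_.add_assoc, ← lam_add,
      neg_add_neg_cancel]

theorem mul_add_neg_mul (a c : S) : mul a c + -mul a c = mul a (c + -c) + -a := by
  rw [neg_mul_eq_lam_neg_add, ← _root_.add_assoc, mul_add_lam]

theorem neg_add_self_add_add_neg_self (a : S) : -a + a + (a + -a) = -a + a := by
  set ε := -a + a
  have hlink : mul a (inv a) = ε := link a
  have hε : ε + ε = ε := neg_add_idem a
  have h : mul a (inv a + -inv a) = ε + a := by
    rw [← mul_add_lam, lam_neg, hlink, lam_def, hlink, InverseAddSemigroup.neg_add_rev,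
      neg_eq_self_of_idem hε, InverseAddSemigroup.neg_neg, ← _root_.add_assoc, hε]
  calc ε + (a + -a) = mul a (inv a) + -mul a (inv a) := by
        rw [mul_add_neg_mul, h, ← _root_.add_assoc]
    _ = ε := by rw [hlink, neg_eq_self_of_idem hε, hε]

theorem add_neg_self_eq_neg_add_self (a : S) : a + -a = -a + a := by
  have h := neg_add_self_add_add_neg_self (-a)
  rw [InverseAddSemigroup.neg_neg] at h
  calc a + -a = a + -a + (-a + a) := h.symm
    _ = -a + a + (a + -a) := add_comm_of_idem (add_neg_idem a) (neg_add_idem a)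
    _ = -a + a := neg_add_self_add_add_neg_self a

end WeakBrace

open InverseAddSemigroup

open WeakBrace
theorem stmt7 {S : Type*} [DualWeakBrace S] (a b e : S) (he : IsIdem e) :
    cdot a (add b e) = add (cdot a b) (cdot a e) := by
  show lam a (b + e) + -(b + e) = lam a b + -b + (lam a e + -e)
  have he' : e + e = e := he
  have hlam : lam a e + lam a e = lam a e := by rw [← lam_add, he']
  have hcentral := add_comm_of_idem_of_clifford add_neg_self_eq_neg_add_self
    (add_idem_of_idem hlam he') (-b)
  rw [lam_add, InverseAddSemigroup.neg_add_rev, neg_eq_self_of_idem he']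
  calc lam a b + lam a e + (e + -b) = lam a b + (lam a e + e + -b) := by
        simp only [_root_.add_assoc]
    _ = lam a b + -b + (lam a e + e) := by rw [← hcentral, _root_.add_assoc]
end
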